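/- arXiv:1111.5884 — 4 statements merged into one kernel-verified Lean document; each statement's English description precedes it below -/
import Mathlib

section
/- If A, B ⊆ 𝔽₂ⁿ are nonempty sets with duality measure D(A,B) = 1, then A is contained in a single affine coset of the orthogonal complement of the 𝔽₂-span of B. -/
open Finset

/-- The ±1 character of an element of `ZMod 2`. -/
noncomputable def chi (x : ZMod 2) : ℝ := if x = 0 then 1 else -1

/-- The `𝔽₂` inner product on `𝔽₂ⁿ`. -/
def ip {n : ℕ} (a b : Fin n → ZMod 2) : ZMod 2 := ∑ i, a i * b i

/-- The duality measure `D(A,B) = |𝔼_{a∈A,b∈B} (-1)^{⟨a,b⟩}|`. -/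
noncomputable def Dm {n : ℕ} (A B : Finset (Fin n → ZMod 2)) : ℝ :=
  |∑ a ∈ A, ∑ b ∈ B, chi (ip a b)| / ((A.card : ℝ) * B.card)

/-!
A sum of `N` numbers in `[-1, 1]` has absolute value `N` only if all of them are `1` or all are
`-1`. Hence `D(A,B) = 1` forces `(-1)^⟨a,b⟩`, and so `⟨a,b⟩`, to be constant on `A × B`. For a
fixed `a₀ ∈ A` we then get `⟨a + a₀, b⟩ = ⟨a, b⟩ + ⟨a₀, b⟩ = 2⟨a₀, b⟩ = 0`, i.e. `A ⊆ a₀ + B^⊥`.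
-/

lemma Finset.forall_eq_one_or_forall_eq_neg_one_of_abs_sum_eq_card {ι : Type*}
    {s : Finset ι} {f : ι → ℝ} (hf : ∀ i ∈ s, |f i| ≤ 1) (h : |∑ i ∈ s, f i| = #s) :
    (∀ i ∈ s, f i = 1) ∨ (∀ i ∈ s, f i = -1) := by
  rcases abs_eq (Nat.cast_nonneg #s) |>.mp h with hsum | hsum
  · left
    have hzero : ∑ i ∈ s, (1 - f i) = 0 := by simp [sum_sub_distrib, hsum]
    intro i hi
    have := (sum_eq_zero_iff_of_nonneg fun j hj ↦ sub_nonneg.2 (abs_le.1 (hf j hj)).2).1 hzero i hi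
    linarith
  · right
    have hzero : ∑ i ∈ s, (f i + 1) = 0 := by simp [sum_add_distrib, hsum]
    intro i hi
    have := (sum_eq_zero_iff_of_nonneg fun j hj ↦ neg_le_iff_add_nonneg.1 (abs_le.1 (hf j hj)).1).1
      hzero i hi
    linarith

lemma abs_chi (x : ZMod 2) : |chi x| = 1 := by
  unfold chi; split_ifs <;> norm_num

lemma chi_injective : Function.Injective chi := by
  have hcases : ∀ x : ZMod 2, x = 0 ∨ x = 1 := by decide
  intro x y hxy
  rcases hcases x with rfl | rfl <;> rcases hcases y with rfl | rfl <;>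
    first | rfl | norm_num [chi] at hxy

lemma ip_add_left {n : ℕ} (a a' b : Fin n → ZMod 2) : ip (a + a') b = ip a b + ip a' b :=
  add_dotProduct a a' b

lemma abs_sum_chi_ip_eq_card_of_Dm_eq_one {n : ℕ} {A B : Finset (Fin n → ZMod 2)}
    (h : Dm A B = 1) : |∑ p ∈ A ×ˢ B, chi (ip p.1 p.2)| = #(A ×ˢ B) := by
  have hcard : ((A.card : ℝ) * B.card) ≠ 0 := by
    rintro hzero
    simp [Dm, hzero] at h
  rw [sum_product, card_product, Nat.cast_mul]
  exact (div_eq_one_iff_eq hcard).1 h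

lemma ip_eq_of_Dm_eq_one {n : ℕ} {A B : Finset (Fin n → ZMod 2)} (h : Dm A B = 1)
    {a a' b : Fin n → ZMod 2} (ha : a ∈ A) (ha' : a' ∈ A) (hb : b ∈ B) : ip a b = ip a' b := by
  refine chi_injective ?_
  rcases forall_eq_one_or_forall_eq_neg_one_of_abs_sum_eq_card (fun p _ ↦ (abs_chi _).le)
    (abs_sum_chi_ip_eq_card_of_Dm_eq_one h) with hconst | hconst <;>
  exact (hconst (a, b) (mk_mem_product ha hb)).trans (hconst (a', b) (mk_mem_product ha' hb)).symm

theorem stmt_0_general {n : ℕ} (A B : Finset (Fin n → ZMod 2))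
    (hA : A.Nonempty) (h : Dm A B = 1) :
    ∃ x₀ : Fin n → ZMod 2, ∀ a ∈ A, ∀ b ∈ B, ip (a + x₀) b = 0 := by
  obtain ⟨a₀, ha₀⟩ := hA
  refine ⟨a₀, fun a ha b hb ↦ ?_⟩
  rw [ip_add_left, ip_eq_of_Dm_eq_one h ha ha₀ hb, CharTwo.add_self_eq_zero]

/-- If `D(A,B) = 1` then `A` lies in a single affine coset of the orthogonal
complement of the `𝔽₂`-span of `B`. -/
theorem stmt_0 {n : ℕ} (A B : Finset (Fin n → ZMod 2))
    (hA : A.Nonempty) (hB : B.Nonempty) (h : Dm A B = 1) :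
    ∃ x₀ : Fin n → ZMod 2, ∀ a ∈ A, ∀ b ∈ B, ip (a + x₀) b = 0 :=
  stmt_0_general A B hA h
end

section
/- Define A: ℕ × ℕ → ℕ recursively by A(m,r) ≤ A(m, ⌈r/2⌉) + A(⌈m/2⌉, r) for m, r > 1, with A(1,r) ≤ 1 and A(m,1) ≤ 1. Then A(m,r) ≤ C(log₂m + log₂r, log₂r), the binomial coefficient, for all m, r that are powers of 2. -/
/-! A bound satisfying Pascal's recurrence with boundary values at most one is dominated by the
binomial coefficients. On powers of two, halving `m = 2 ^ a` or `r = 2 ^ b` (with rounding up)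
just lowers the exponent, so `(a, b) ↦ A(2 ^ a, 2 ^ b)` is such a bound. -/

theorem le_add_choose_of_le_pascal {g : ℕ → ℕ → ℕ}
    (hleft : ∀ b, g 0 b ≤ 1) (hright : ∀ a, g a 0 ≤ 1)
    (hpascal : ∀ a b, g (a + 1) (b + 1) ≤ g (a + 1) b + g a (b + 1)) :
    ∀ a b, g a b ≤ (a + b).choose b
  | 0, b => (hleft b).trans (Nat.choose_pos (by omega))
  | a + 1, 0 => (hright _).trans (Nat.choose_pos (Nat.zero_le _))
  | a + 1, b + 1 =>
    calc g (a + 1) (b + 1) ≤ g (a + 1) b + g a (b + 1) := hpascal a b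
      _ ≤ (a + 1 + b).choose b + (a + (b + 1)).choose (b + 1) :=
        add_le_add (le_add_choose_of_le_pascal hleft hright hpascal (a + 1) b)
          (le_add_choose_of_le_pascal hleft hright hpascal a (b + 1))
      _ = (a + 1 + (b + 1)).choose (b + 1) := by
        rw [Nat.add_right_comm a 1, Nat.add_right_comm a 1, Nat.choose_succ_succ, Nat.add_assoc]
termination_by a b => a + b

theorem two_pow_succ_add_one_div_two (k : ℕ) : (2 ^ (k + 1) + 1) / 2 = 2 ^ k := by
  rw [pow_succ]
  omega

/-- The Nisan–Wigderson style recursion A(m,r) ≤ A(m,⌈r/2⌉) + A(⌈m/2⌉,r) with boundary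
values ≤ 1 is bounded by the binomial coefficient C(log₂m + log₂r, log₂r) on powers of 2. -/
theorem stmt_15 (f : ℕ → ℕ → ℕ)
    (h1 : ∀ r, f 1 r ≤ 1) (h2 : ∀ m, f m 1 ≤ 1)
    (hrec : ∀ m r, 1 < m → 1 < r → f m r ≤ f m ((r + 1) / 2) + f ((m + 1) / 2) r) :
    ∀ a b : ℕ, f (2 ^ a) (2 ^ b) ≤ (a + b).choose b := by
  refine le_add_choose_of_le_pascal (g := fun a b => f (2 ^ a) (2 ^ b)) (fun b => h1 _)
    (fun a => h2 _) fun a b => ?_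
  have hstep := hrec (2 ^ (a + 1)) (2 ^ (b + 1)) (Nat.one_lt_two_pow (by omega))
    (Nat.one_lt_two_pow (by omega))
  rwa [two_pow_succ_add_one_div_two, two_pow_succ_add_one_div_two] at hstep
end

section
/- A deterministic communication protocol (binary protocol tree) with t leaves for a function f: X × Y → {0,1} can be converted into a protocol for f with communication complexity O(log t). Concretely, CC(f) ≤ 2·log_{3/2}(t). -/
/-- A deterministic communication protocol tree: internal nodes are owned by one of the two
players and branch on a bit computed from that player's input; leaves output a value. -/
inductive Protocol (X Y : Type) : Type where
  | leaf : Bool → Protocol X Y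
  | nodeA : (X → Bool) → Protocol X Y → Protocol X Y → Protocol X Y
  | nodeB : (Y → Bool) → Protocol X Y → Protocol X Y → Protocol X Y

/-- The output of a protocol on inputs (x, y). -/
def Protocol.eval {X Y : Type} : Protocol X Y → X → Y → Bool
  | .leaf o, _, _ => o
  | .nodeA g P0 P1, x, y => if g x then (P1.eval x y) else (P0.eval x y)
  | .nodeB g P0 P1, x, y => if g y then (P1.eval x y) else (P0.eval x y)

/-- The number of leaves of a protocol tree. -/
def Protocol.leaves {X Y : Type} : Protocol X Y → ℕ
  | .leaf _ => 1
  | .nodeA _ P0 P1 => P0.leaves + P1.leaves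
  | .nodeB _ P0 P1 => P0.leaves + P1.leaves

/-- The depth (worst-case number of bits exchanged) of a protocol tree. -/
def Protocol.depth {X Y : Type} : Protocol X Y → ℕ
  | .leaf _ => 0
  | .nodeA _ P0 P1 => 1 + max P0.depth P1.depth
  | .nodeB _ P0 P1 => 1 + max P0.depth P1.depth

/-!
Balancing a protocol tree. Walking down from the root of a tree with `t` leaves, always into
the heavier child, one reaches a subtree `v` with between `t/3` and `2t/3` leaves. The inputs
that reach `v` form a rectangle `A × B`, so two bits (Alice announces `x ∈ A`, Bob announces
`y ∈ B`) decide whether to run the subtree `v` or the rest of the tree with `v` cut out; both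
have at most `2t/3` leaves. Recursing on both pieces, each pair of bits shrinks the number of
leaves by a factor `3/2`, giving depth at most `2 log_{3/2} t`.
-/

open Real

lemma Real.logb_add_one_le_logb {b m t : ℝ} (hb : 1 < b) (hm : 0 < m) (h : b * m ≤ t) :
    logb b m + 1 ≤ logb b t :=
  calc logb b m + 1 = logb b (b * m) := by
        rw [logb_mul (by positivity) hm.ne', logb_self_eq_one hb, add_comm]
    _ ≤ logb b t := logb_le_logb_of_le hb (by positivity) h

lemma two_mul_logb_add_two_le {m t : ℕ} (hm : 1 ≤ m) (h : 3 * m ≤ 2 * t) :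
    2 * logb (3 / 2) (m : ℝ) + 2 ≤ 2 * logb (3 / 2) (t : ℝ) := by
  have hmt : (3 / 2 : ℝ) * m ≤ t := by
    have : ((3 * m : ℕ) : ℝ) ≤ (2 * t : ℕ) := by exact_mod_cast h
    push_cast at this
    linarith
  linarith [logb_add_one_le_logb (by norm_num) (by exact_mod_cast hm : (0 : ℝ) < m) hmt]

namespace Protocol

variable {X Y : Type}

def rectIte (A : X → Bool) (B : Y → Bool) (P Q : Protocol X Y) : Protocol X Y :=
  .nodeA A Q (.nodeB B Q P)

@[simp]
lemma eval_rectIte (A : X → Bool) (B : Y → Bool) (P Q : Protocol X Y) (x : X) (y : Y) :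
    (rectIte A B P Q).eval x y = if A x && B y then P.eval x y else Q.eval x y := by
  cases hA : A x <;> cases hB : B y <;> simp [rectIte, eval, hA, hB]

lemma depth_rectIte (A : X → Bool) (B : Y → Bool) (P Q : Protocol X Y) :
    (rectIte A B P Q).depth = 2 + max P.depth Q.depth := by
  simp only [rectIte, depth]
  omega

lemma one_le_leaves (P : Protocol X Y) : 1 ≤ P.leaves := by
  induction P <;> simp only [leaves] <;> omega

/-- For `t = P.leaves`, both pieces `Pin` and `Pout` have at most `2t/3` leaves. -/
def HasBalancedCut (t : ℕ) (P : Protocol X Y) : Prop :=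
  ∃ (A : X → Bool) (B : Y → Bool) (Pin Pout : Protocol X Y),
    (∀ x y, P.eval x y = (rectIte A B Pin Pout).eval x y) ∧
    Pin.leaves + Pout.leaves = P.leaves ∧ t < 3 * Pin.leaves ∧ 3 * Pin.leaves ≤ 2 * t

lemma HasBalancedCut.congr {t : ℕ} {P P' : Protocol X Y} (h : P.HasBalancedCut t)
    (heval : ∀ x y, P'.eval x y = P.eval x y) (hleaves : P'.leaves = P.leaves) :
    P'.HasBalancedCut t := by
  obtain ⟨A, B, Pin, Pout, hcut, hsum, hlow, hhigh⟩ := h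
  exact ⟨A, B, Pin, Pout, fun x y => (heval x y).trans (hcut x y), hleaves ▸ hsum, hlow, hhigh⟩

lemma hasBalancedCut_nodeA {t : ℕ} (g : X → Bool) (P0 P1 : Protocol X Y)
    (hle : P0.leaves ≤ P1.leaves) (hP : 2 * t < 3 * (nodeA g P0 P1).leaves)
    (ih : 2 * t < 3 * P1.leaves → P1.HasBalancedCut t) : (nodeA g P0 P1).HasBalancedCut t := by
  simp only [HasBalancedCut, leaves] at hP ⊢
  by_cases hstop : 3 * P1.leaves ≤ 2 * t
  · refine ⟨g, fun _ => true, P1, P0, fun x y => ?_, by omega, by omega, hstop⟩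
    cases hg : g x <;> simp [eval, hg]
  · obtain ⟨A, B, Pin, Pout, hcut, hsum, hlow, hhigh⟩ := ih (by omega)
    refine ⟨fun x => g x && A x, B, Pin, nodeA g P0 Pout, fun x y => ?_, ?_, hlow, hhigh⟩
    · cases hg : g x <;> simp [eval, hg, hcut]
    · simp only [leaves]
      omega

lemma hasBalancedCut_nodeB {t : ℕ} (g : Y → Bool) (P0 P1 : Protocol X Y)
    (hle : P0.leaves ≤ P1.leaves) (hP : 2 * t < 3 * (nodeB g P0 P1).leaves)
    (ih : 2 * t < 3 * P1.leaves → P1.HasBalancedCut t) : (nodeB g P0 P1).HasBalancedCut t := by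
  simp only [HasBalancedCut, leaves] at hP ⊢
  by_cases hstop : 3 * P1.leaves ≤ 2 * t
  · refine ⟨fun _ => true, g, P1, P0, fun x y => ?_, by omega, by omega, hstop⟩
    cases hg : g y <;> simp [eval, hg]
  · obtain ⟨A, B, Pin, Pout, hcut, hsum, hlow, hhigh⟩ := ih (by omega)
    refine ⟨A, fun y => g y && B y, Pin, nodeB g P0 Pout, fun x y => ?_, ?_, hlow, hhigh⟩
    · cases hg : g y <;> simp [eval, hg, hcut]
    · simp only [leaves]
      omega

lemma eval_nodeA_swap (g : X → Bool) (P0 P1 : Protocol X Y) (x : X) (y : Y) :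
    (nodeA g P0 P1).eval x y = (nodeA (fun x => !g x) P1 P0).eval x y := by
  cases hg : g x <;> simp [eval, hg]

lemma eval_nodeB_swap (g : Y → Bool) (P0 P1 : Protocol X Y) (x : X) (y : Y) :
    (nodeB g P0 P1).eval x y = (nodeB (fun y => !g y) P1 P0).eval x y := by
  cases hg : g y <;> simp [eval, hg]

lemma hasBalancedCut_of_two_mul_lt {t : ℕ} (ht : 2 ≤ t) (P : Protocol X Y) (hP : 2 * t < 3 * P.leaves) :
    P.HasBalancedCut t := by
  induction P with
  | leaf o => simp only [leaves] at hP; omega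
  | nodeA g P0 P1 ih0 ih1 =>
    by_cases hle : P0.leaves ≤ P1.leaves
    · exact hasBalancedCut_nodeA g P0 P1 hle hP ih1
    · refine (hasBalancedCut_nodeA _ P1 P0 (by omega) ?_ ih0).congr
        (eval_nodeA_swap g P0 P1) (by simp only [leaves]; omega)
      simp only [leaves] at hP ⊢
      omega
  | nodeB g P0 P1 ih0 ih1 =>
    by_cases hle : P0.leaves ≤ P1.leaves
    · exact hasBalancedCut_nodeB g P0 P1 hle hP ih1
    · refine (hasBalancedCut_nodeB _ P1 P0 (by omega) ?_ ih0).congr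
        (eval_nodeB_swap g P0 P1) (by simp only [leaves]; omega)
      simp only [leaves] at hP ⊢
      omega

lemma exists_eval_eq_depth_le_two_mul_logb (P : Protocol X Y) :
    ∃ Q : Protocol X Y, (∀ x y, Q.eval x y = P.eval x y) ∧
      (Q.depth : ℝ) ≤ 2 * logb (3 / 2) (P.leaves : ℝ) := by
  induction hn : P.leaves using Nat.strong_induction_on generalizing P with
  | _ t ih =>
  by_cases ht : 2 ≤ t
  · obtain ⟨A, B, Pin, Pout, hcut, hsum, hlow, hhigh⟩ := hasBalancedCut_of_two_mul_lt ht P (by omega)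
    have hin := Pin.one_le_leaves
    have hout := Pout.one_le_leaves
    obtain ⟨Qin, hQin, hdin⟩ := ih Pin.leaves (by omega) Pin rfl
    obtain ⟨Qout, hQout, hdout⟩ := ih Pout.leaves (by omega) Pout rfl
    refine ⟨rectIte A B Qin Qout, fun x y => by simp [hcut, hQin, hQout], ?_⟩
    have hin' := two_mul_logb_add_two_le hin hhigh
    have hout' := two_mul_logb_add_two_le hout (by omega : 3 * Pout.leaves ≤ 2 * t)
    rw [depth_rectIte, Nat.cast_add, Nat.cast_max, Nat.cast_ofNat]
    suffices max (Qin.depth : ℝ) Qout.depth ≤ 2 * logb (3 / 2) (t : ℝ) - 2 by linarith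
    exact max_le (by linarith) (by linarith)
  · cases P with
    | leaf o =>
      simp only [leaves] at hn
      exact ⟨leaf o, fun _ _ => rfl, by simp [depth, ← hn]⟩
    | nodeA g P0 P1 | nodeB g P0 P1 =>
      have := P0.one_le_leaves
      have := P1.one_le_leaves
      simp only [leaves] at hn
      omega

end Protocol

/-- A protocol with t leaves can be converted to one for the same function of
communication complexity at most 2·log_{3/2}(t). -/
theorem stmt_16 (X Y : Type) (f : X → Y → Bool) (P : Protocol X Y)
    (hP : ∀ x y, P.eval x y = f x y) :
    ∃ Q : Protocol X Y, (∀ x y, Q.eval x y = f x y) ∧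
      (Q.depth : ℝ) ≤ 2 * Real.logb (3 / 2) (P.leaves : ℝ) := by
  obtain ⟨Q, hQ, hdepth⟩ := P.exists_eval_eq_depth_le_two_mul_logb
  exact ⟨Q, fun x y => (hQ x y).trans (hP x y), hdepth⟩
end

section
/- Let M be a {0,1}-valued matrix partitioned as M = [[Q, R],[S, T]] where Q is a monochromatic submatrix. Then rank(R) + rank(S) ≤ rank(M) + 1, where rank is over the real numbers. -/
/-!
The constant block `Q` is a rank-one matrix, so replacing it by `0` lowers the rank by at most
one. For `M' = [[0, R], [S, T]]`, projecting the column space of `M'` onto the top rows yields a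
space containing the column space of `R`, while the kernel of that projection contains the columns
`(0, S x) = M' (x, 0)`; rank–nullity then gives `rank R + rank S ≤ rank M'`.
-/

open Matrix Module

section

variable {K V V₁ V₂ : Type*} [Field K] [AddCommGroup V] [Module K V]
  [AddCommGroup V₁] [Module K V₁] [AddCommGroup V₂] [Module K V₂]

theorem Submodule.finrank_map_add_finrank_inf_ker (W : Submodule K V) [FiniteDimensional K W]
    (f : V →ₗ[K] V₁) :
    finrank K (W.map f) + finrank K ↥(W ⊓ LinearMap.ker f) = finrank K W := by
  rw [← (f.domRestrict W).finrank_range_add_finrank_ker, LinearMap.range_domRestrict,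
    LinearMap.ker_domRestrict, ← Submodule.map_comap_subtype, Submodule.finrank_map_subtype_eq]

theorem Submodule.finrank_add_finrank_le_of_le_map {W : Submodule K V} [FiniteDimensional K W]
    {p₁ : V →ₗ[K] V₁} {p₂ : V →ₗ[K] V₂} {U₁ : Submodule K V₁} {U₂ : Submodule K V₂}
    (h₁ : U₁ ≤ W.map p₁) (h₂ : U₂ ≤ (W ⊓ LinearMap.ker p₁).map p₂) :
    finrank K U₁ + finrank K U₂ ≤ finrank K W := by
  calc finrank K U₁ + finrank K U₂
      ≤ finrank K (W.map p₁) + finrank K ↥(W ⊓ LinearMap.ker p₁) :=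
        add_le_add (Submodule.finrank_mono h₁)
          ((Submodule.finrank_mono h₂).trans (Submodule.finrank_map_le _ _))
    _ = finrank K W := W.finrank_map_add_finrank_inf_ker p₁

end

namespace Matrix

variable {K m m₁ m₂ n n₁ n₂ : Type*} [Field K] [Fintype n] [Fintype n₁] [Fintype n₂]

theorem rank_add_le (A B : Matrix m n K) : (A + B).rank ≤ A.rank + B.rank := by
  rw [rank, rank, rank, mulVecLin_add]
  refine le_trans (Submodule.finrank_mono ?_) (Submodule.finrank_add_le_finrank_add_finrank _ _)
  rintro _ ⟨x, rfl⟩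
  exact Submodule.add_mem_sup ⟨x, rfl⟩ ⟨x, rfl⟩

theorem rank_add_rank_le_rank_fromBlocks_zero (B : Matrix m₁ n₂ K) (C : Matrix m₂ n₁ K)
    (D : Matrix m₂ n₂ K) : B.rank + C.rank ≤ (fromBlocks 0 B C D).rank := by
  refine Submodule.finrank_add_finrank_le_of_le_map (p₁ := LinearMap.funLeft K K Sum.inl)
    (p₂ := LinearMap.funLeft K K Sum.inr) ?_ ?_
  · rintro _ ⟨y, rfl⟩
    refine ⟨_, ⟨Sum.elim 0 y, rfl⟩, ?_⟩
    ext i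
    simp [fromBlocks_mulVec]
  · rintro _ ⟨x, rfl⟩
    refine ⟨_, ⟨⟨Sum.elim x 0, rfl⟩, ?_⟩, ?_⟩ <;> ext i <;> simp [fromBlocks_mulVec]

theorem rank_fromBlocks_zero_le_of_forall_eq {A : Matrix m₁ n₁ K} (B : Matrix m₁ n₂ K)
    (C : Matrix m₂ n₁ K) (D : Matrix m₂ n₂ K) {c : K} (hA : ∀ i j, A i j = c) :
    (fromBlocks 0 B C D).rank ≤ (fromBlocks A B C D).rank + 1 := by
  have hdecomp : fromBlocks 0 B C D = fromBlocks A B C D +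
      vecMulVec (Sum.elim (fun _ => -c) 0) (Sum.elim (fun _ => 1) 0) := by
    ext (i | i) (j | j) <;> simp [vecMulVec_apply, hA]
  rw [hdecomp]
  exact (rank_add_le _ _).trans (Nat.add_le_add_left (rank_vecMulVec_le _ _) _)

end Matrix

theorem stmt_17_general {k₁ k₂ l₁ l₂ : ℕ}
    (M : Matrix (Fin k₁ ⊕ Fin k₂) (Fin l₁ ⊕ Fin l₂) ℝ)
    (c : ℝ) (hQ : ∀ i j, M (Sum.inl i) (Sum.inl j) = c) :
    (Matrix.of fun i j => M (Sum.inl i) (Sum.inr j)).rank +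
      (Matrix.of fun i j => M (Sum.inr i) (Sum.inl j)).rank ≤ M.rank + 1 := by
  calc M.toBlocks₁₂.rank + M.toBlocks₂₁.rank
      ≤ (fromBlocks 0 M.toBlocks₁₂ M.toBlocks₂₁ M.toBlocks₂₂).rank :=
        rank_add_rank_le_rank_fromBlocks_zero _ _ _
    _ ≤ (fromBlocks M.toBlocks₁₁ M.toBlocks₁₂ M.toBlocks₂₁ M.toBlocks₂₂).rank + 1 :=
        rank_fromBlocks_zero_le_of_forall_eq _ _ _ hQ
    _ = M.rank + 1 := by rw [fromBlocks_toBlocks]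

/-- If Q is a monochromatic block of the 0/1 block matrix M = [[Q,R],[S,T]], then
rank(R) + rank(S) ≤ rank(M) + 1 over ℝ. -/
theorem stmt_17 {k₁ k₂ l₁ l₂ : ℕ}
    (M : Matrix (Fin k₁ ⊕ Fin k₂) (Fin l₁ ⊕ Fin l₂) ℝ)
    (h01 : ∀ i j, M i j = 0 ∨ M i j = 1)
    (c : ℝ) (hQ : ∀ i j, M (Sum.inl i) (Sum.inl j) = c) :
    (Matrix.of fun i j => M (Sum.inl i) (Sum.inr j)).rank +
      (Matrix.of fun i j => M (Sum.inr i) (Sum.inl j)).rank ≤ M.rank + 1 :=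
  stmt_17_general M c hQ
end
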